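/- arXiv:1106.3616 — 9 statements merged into one kernel-verified Lean document; each statement's English description precedes it below -/
import Mathlib

section
/- Let A be an invertible n×n real matrix and k < n a positive integer. If A a is k-sparse for every k-sparse vector a in R^n, then A = P D for some permutation matrix P and invertible diagonal matrix D. -/
/-!
Since `det A ≠ 0`, some term of the Leibniz expansion survives: there is a permutation `σ` with
`A (σ i) i ≠ 0` for all `i`. For any set `T` of columns, a generic vector supported on `T` is
`k`-sparse once `#T ≤ k`, and its image is nonzero in every row meeting a column of `T`, so the
columns of `T` jointly meet at most `k` rows. If some entry `A r i` with `r ≠ σ i` were nonzero,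
choose `T ∋ i` of size `k` avoiding `σ⁻¹ r` (possible as `0 < k < n`): its columns meet the `k`
rows `σ '' T` and also `r`, too many. So `A` is supported on the pattern of `σ`.
-/

/-- A vector is `k`-sparse if it has at most `k` nonzero entries. -/
def KSparse {m : ℕ} (k : ℕ) (a : Fin m → ℝ) : Prop :=
  (Finset.univ.filter fun i => a i ≠ 0).card ≤ k

open Finset

namespace Matrix

variable {m n α : Type*}

open Classical in
noncomputable def rowSupport [Fintype m] [Zero α] (A : Matrix m n α) (T : Finset n) : Finset m :=
  univ.filter fun r => ∃ t ∈ T, A r t ≠ 0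

theorem mem_rowSupport [Fintype m] [Zero α] {A : Matrix m n α} {T : Finset n} {r : m} :
    r ∈ A.rowSupport T ↔ ∃ t ∈ T, A r t ≠ 0 := by
  simp [rowSupport]

theorem exists_supported_mulVec_ne_zero {K : Type*} [Field K] [Infinite K] [Finite m] [Fintype n]
    [DecidableEq n] (A : Matrix m n K) (T : Set n) :
    ∃ x : n → K, (∀ j ∉ T, x j = 0) ∧ ∀ r, (∃ t ∈ T, A r t ≠ 0) → (A *ᵥ x) r ≠ 0 := by
  let rows := {r : m // ∃ t ∈ T, A r t ≠ 0}
  let f : rows → Module.Dual K (n → K) := fun r => LinearMap.proj r.1 ∘ₗ A.mulVecLin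
  obtain ⟨x, hxT, hx⟩ := Module.Dual.exists_forall_mem_ne_zero_of_forall_exists
    (Submodule.pi Tᶜ fun _ => ⊥) f fun ⟨r, t, ht, hrt⟩ =>
      ⟨Pi.single t 1, fun j hj => by simp [show j ≠ t by rintro rfl; exact hj ht],
        by simpa [f, mulVec_single_one] using hrt⟩
  exact ⟨x, fun j hj => by simpa using hxT j hj, fun r hr => hx ⟨r, hr⟩⟩

theorem exists_perm_forall_ne_zero_of_det_ne_zero {R : Type*} [CommRing R] [Fintype n]
    [DecidableEq n] {A : Matrix n n R} (hA : A.det ≠ 0) :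
    ∃ σ : Equiv.Perm n, ∀ i, A (σ i) i ≠ 0 := by
  contrapose! hA
  rw [det_apply]
  refine sum_eq_zero fun σ _ => ?_
  obtain ⟨i, hi⟩ := hA σ
  rw [prod_eq_zero (f := fun j => A (σ j) j) (mem_univ i) hi, smul_zero]

theorem eq_zero_of_card_rowSupport_le [Fintype n] [DecidableEq n] [Zero α] {A : Matrix n n α}
    {k : ℕ} (hk : 0 < k) (hkn : k < Fintype.card n)
    (hrows : ∀ T : Finset n, #T = k → #(A.rowSupport T) ≤ k)
    {σ : Equiv.Perm n} (hσ : ∀ i, A (σ i) i ≠ 0) {r i : n} (hri : r ≠ σ i) : A r i = 0 := by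
  by_contra hAri
  have hji : σ.symm r ≠ i := by rintro rfl; simp at hri
  obtain ⟨T, hiT, hTj, hTk⟩ := exists_subsuperset_card_eq
    (singleton_subset_iff.mpr (mem_erase.mpr ⟨hji.symm, mem_univ i⟩))
    (by rwa [card_singleton]) (by simp [card_erase_of_mem]; omega : k ≤ #(univ.erase (σ.symm r)))
  have hrT : r ∉ T.map σ.toEmbedding := fun h => notMem_erase _ _ (hTj (mem_map_equiv.mp h))
  have hsub : (T.map σ.toEmbedding).cons r hrT ⊆ A.rowSupport T := by
    intro s hs
    rw [mem_cons, mem_map_equiv] at hs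
    rw [mem_rowSupport]
    rcases hs with rfl | hs
    · exact ⟨i, singleton_subset_iff.mp hiT, hAri⟩
    · exact ⟨σ.symm s, hs, by simpa using hσ (σ.symm s)⟩
  have hcard := card_le_card hsub
  rw [card_cons, card_map, hTk] at hcard
  have := hrows T hTk
  omega

theorem eq_permMatrix_mul_diagonal [Fintype n] [DecidableEq n] {R : Type*} [NonAssocSemiring R]
    {A : Matrix n n R} {σ : Equiv.Perm n} (hA : ∀ r i, r ≠ σ i → A r i = 0) :
    A = σ⁻¹.permMatrix R * diagonal fun i => A (σ i) i := by
  ext r i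
  rw [mul_diagonal, Equiv.Perm.permMatrix, PEquiv.toMatrix_apply, Equiv.toPEquiv_apply]
  by_cases h : r = σ i
  · simp [h]
  · simp [hA r i h, Equiv.symm_apply_eq, h]

end Matrix

open Matrix

theorem card_rowSupport_le_of_KSparse {m n k : ℕ} {A : Matrix (Fin m) (Fin n) ℝ}
    (hsp : ∀ a : Fin n → ℝ, KSparse k a → KSparse k (A.mulVec a))
    {T : Finset (Fin n)} (hT : #T ≤ k) : #(A.rowSupport T) ≤ k := by
  obtain ⟨x, hxT, hx⟩ := A.exists_supported_mulVec_ne_zero T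
  have hxk : KSparse k x := (card_le_card fun j hj => by
    by_contra hjT; exact (mem_filter.mp hj).2 (hxT j hjT)).trans hT
  refine (card_le_card fun r hr => ?_).trans (hsp x hxk)
  simpa using hx r (mem_rowSupport.mp hr)

theorem stmt1 {n k : ℕ} (hk : 0 < k) (hkn : k < n)
    (A : Matrix (Fin n) (Fin n) ℝ) (hA : IsUnit A)
    (hsp : ∀ a : Fin n → ℝ, KSparse k a → KSparse k (A.mulVec a)) :
    ∃ (σ : Equiv.Perm (Fin n)) (d : Fin n → ℝ),
      (∀ i, d i ≠ 0) ∧ A = σ.permMatrix ℝ * Matrix.diagonal d := by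
  obtain ⟨σ, hσ⟩ :=
    exists_perm_forall_ne_zero_of_det_ne_zero ((isUnit_iff_isUnit_det A).mp hA).ne_zero
  have hz : ∀ r i, r ≠ σ i → A r i = 0 := fun r i hri =>
    eq_zero_of_card_rowSupport_le hk (by simpa using hkn)
      (fun T hT => card_rowSupport_le_of_KSparse hsp hT.le) hσ hri
  exact ⟨σ⁻¹, _, hσ, eq_permMatrix_mul_diagonal hz⟩
end

section
/- Let A, B be n×m real matrices with m ≥ 2, and suppose A satisfies the spark condition for sparsity 1 (i.e., no column of A is zero and no two columns are parallel, equivalently A is injective on 1-sparse vectors). If for each i = 1,...,m there exists a 1-sparse vector b_i with A e_i = B b_i, then there exist a permutation matrix P and an invertible diagonal matrix D such that A = B P D. -/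
theorem eq_mul_permMatrix_mul_diagonal_of_col_eq {l m R : Type*} [Fintype m] [DecidableEq m]
    [CommSemiring R] {A B : Matrix l m R} (σ : Equiv.Perm m) (d : m → R)
    (h : ∀ i, A.col i = d i • B.col (σ i)) :
    A = B * σ⁻¹.permMatrix R * Matrix.diagonal d := by
  ext r i
  rw [Matrix.mul_diagonal, Equiv.Perm.permMatrix, PEquiv.mul_toMatrix_toPEquiv,
    Matrix.submatrix_apply, ← Equiv.Perm.inv_def, inv_inv, id, ← Matrix.col_apply A, h,
    Pi.smul_apply, smul_eq_mul, mul_comm, Matrix.col_apply]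

theorem ksparse_zero {m k : ℕ} : KSparse k (0 : Fin m → ℝ) := by
  simp [KSparse]

theorem ksparse_one_single {m : ℕ} (j : Fin m) (c : ℝ) : KSparse 1 (Pi.single j c) := by
  have hsupp : ∀ i, (Pi.single j c : Fin m → ℝ) i ≠ 0 → i = j := fun i hi =>
    by_contra fun hij => hi (by simp [hij])
  refine Finset.card_le_one.2 fun a ha b hb => ?_
  rw [hsupp a (Finset.mem_filter.1 ha).2, hsupp b (Finset.mem_filter.1 hb).2]

theorem KSparse.eq_single {m : ℕ} {b : Fin m → ℝ} (hb : KSparse 1 b) {j : Fin m}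
    (hj : b j ≠ 0) : b = Pi.single j (b j) := by
  ext k
  rcases eq_or_ne k j with rfl | hkj
  · simp
  · rw [Pi.single_eq_of_ne hkj]
    by_contra hk
    exact hkj (Finset.card_le_one.1 hb k (by simpa using hk) j (by simpa using hj))

def SparkCondition {n m : ℕ} (k : ℕ) (A : Matrix (Fin n) (Fin m) ℝ) : Prop :=
  ∀ a₁ a₂ : Fin m → ℝ, KSparse k a₁ → KSparse k a₂ → A.mulVec a₁ = A.mulVec a₂ → a₁ = a₂

namespace SparkCondition

variable {n m : ℕ} {A : Matrix (Fin n) (Fin m) ℝ}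

theorem eq_zero_of_mulVec_single_eq_zero (hA : SparkCondition 1 A) {i : Fin m} {c : ℝ}
    (h : A.mulVec (Pi.single i c) = 0) : c = 0 := by
  have hsingle := hA _ 0 (ksparse_one_single i c) ksparse_zero (by rw [h, Matrix.mulVec_zero])
  simpa using congrFun hsingle i

theorem exists_col_eq_smul_col (hA : SparkCondition 1 A) {B : Matrix (Fin n) (Fin m) ℝ}
    {i : Fin m} (hcode : ∃ b : Fin m → ℝ, KSparse 1 b ∧ A.mulVec (Pi.single i 1) = B.mulVec b) :
    ∃ (j : Fin m) (c : ℝ), c ≠ 0 ∧ A.col i = c • B.col j := by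
  obtain ⟨b, hb, hAB⟩ := hcode
  have hb0 : b ≠ 0 := by
    rintro rfl
    rw [Matrix.mulVec_zero] at hAB
    exact one_ne_zero (hA.eq_zero_of_mulVec_single_eq_zero hAB)
  obtain ⟨j, hj⟩ : ∃ j, b j ≠ 0 := Function.ne_iff.1 hb0
  refine ⟨j, b j, hj, ?_⟩
  rw [← Matrix.mulVec_single_one, hAB, hb.eq_single hj, Matrix.mulVec_single, op_smul_eq_smul,
    Pi.single_eq_same]

/-- If `f i = f j`, the 1-sparse vectors `c j • e i` and `c i • e j` have the same image. -/
theorem injective_of_col_eq_smul_col (hA : SparkCondition 1 A)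
    {B : Matrix (Fin n) (Fin m) ℝ} {f : Fin m → Fin m} {c : Fin m → ℝ} (hc : ∀ i, c i ≠ 0)
    (hcol : ∀ i, A.col i = c i • B.col (f i)) : Function.Injective f := by
  intro i j hij
  by_contra hne
  have himage : A.mulVec (Pi.single i (c j)) = A.mulVec (Pi.single j (c i)) := by
    simp only [Matrix.mulVec_single, op_smul_eq_smul, hcol, hij, smul_smul, mul_comm]
  have hsingle := congrFun (hA _ _ (ksparse_one_single i _) (ksparse_one_single j _) himage) i
  rw [Pi.single_eq_same, Pi.single_eq_of_ne hne] at hsingle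
  exact hc j hsingle

end SparkCondition

theorem stmt2_general {n m : ℕ}
    (A B : Matrix (Fin n) (Fin m) ℝ)
    (hA : ∀ a₁ a₂ : Fin m → ℝ, KSparse 1 a₁ → KSparse 1 a₂ →
      A.mulVec a₁ = A.mulVec a₂ → a₁ = a₂)
    (hcode : ∀ i : Fin m, ∃ b : Fin m → ℝ, KSparse 1 b ∧
      A.mulVec (Pi.single i 1) = B.mulVec b) :
    ∃ (σ : Equiv.Perm (Fin m)) (d : Fin m → ℝ),
      (∀ i, d i ≠ 0) ∧ A = B * σ.permMatrix ℝ * Matrix.diagonal d := by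
  have hspark : SparkCondition 1 A := hA
  choose f c hc hcol using fun i => hspark.exists_col_eq_smul_col (hcode i)
  let e := Equiv.ofBijective f (hspark.injective_of_col_eq_smul_col hc hcol).bijective_of_finite
  exact ⟨e.symm, c, hc, eq_mul_permMatrix_mul_diagonal_of_col_eq e c hcol⟩

theorem stmt2 {n m : ℕ} (hm : 2 ≤ m)
    (A B : Matrix (Fin n) (Fin m) ℝ)
    (hA : ∀ a₁ a₂ : Fin m → ℝ, KSparse 1 a₁ → KSparse 1 a₂ →
      A.mulVec a₁ = A.mulVec a₂ → a₁ = a₂)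
    (hcode : ∀ i : Fin m, ∃ b : Fin m → ℝ, KSparse 1 b ∧
      A.mulVec (Pi.single i 1) = B.mulVec b) :
    ∃ (σ : Equiv.Perm (Fin m)) (d : Fin m → ℝ),
      (∀ i, d i ≠ 0) ∧ A = B * σ.permMatrix ℝ * Matrix.diagonal d :=
  stmt2_general A B hA hcode
end

section
/- Let M be an n×m real matrix satisfying the spark condition for sparsity k (every set of min(m,2k) columns is linearly independent). Then for any two k-element subsets S1, S2 of {1,...,m}, the span of the columns indexed by S1 ∩ S2 equals the intersection of the span of columns indexed by S1 with the span of columns indexed by S2. -/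
lemma mem_span_cols {n m : ℕ} (M : Matrix (Fin n) (Fin m) ℝ) (S : Finset (Fin m))
    (x : Fin n → ℝ) :
    x ∈ Submodule.span ℝ (M.transpose '' ↑S) ↔
      ∃ a : Fin m → ℝ, (∀ i, i ∉ S → a i = 0) ∧ M.mulVec a = x := by
  have hmv : ∀ a : Fin m → ℝ, M.mulVec a = ∑ i, a i • M.transpose i := by
    intro a
    funext j
    simp [Matrix.mulVec, dotProduct, Finset.sum_apply, Matrix.transpose_apply, mul_comm]
  constructor
  · intro hx
    induction hx using Submodule.span_induction with
    | mem y hy =>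
      obtain ⟨i, hi, rfl⟩ := hy
      refine ⟨Pi.single i 1, ?_, ?_⟩
      · intro j hj
        exact Pi.single_eq_of_ne (by rintro rfl; exact hj hi) 1
      · rw [hmv]
        rw [Finset.sum_eq_single i]
        · simp
        · intro b _ hb; simp [Pi.single_eq_of_ne hb]
        · simp
    | zero => exact ⟨0, fun i _ => rfl, by simp [hmv]⟩
    | add y z _ _ hy hz =>
      obtain ⟨a, ha, rfl⟩ := hy
      obtain ⟨b, hb, rfl⟩ := hz
      exact ⟨a + b, fun i hi => by simp [ha i hi, hb i hi], by
        simp [Matrix.mulVec_add]⟩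
    | smul c y _ hy =>
      obtain ⟨a, ha, rfl⟩ := hy
      exact ⟨c • a, fun i hi => by simp [ha i hi], by simp [Matrix.mulVec_smul]⟩
  · rintro ⟨a, ha, rfl⟩
    rw [hmv]
    rw [← Finset.sum_subset (Finset.subset_univ S)]
    · exact Submodule.sum_mem _ fun i hi =>
        Submodule.smul_mem _ _ (Submodule.subset_span ⟨i, hi, rfl⟩)
    · intro i _ hi
      simp [ha i hi]

theorem stmt4 {n m k : ℕ} (M : Matrix (Fin n) (Fin m) ℝ)
    (hM : ∀ a₁ a₂ : Fin m → ℝ, KSparse k a₁ → KSparse k a₂ →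
      M.mulVec a₁ = M.mulVec a₂ → a₁ = a₂)
    (S₁ S₂ : Finset (Fin m)) (hS₁ : S₁.card = k) (hS₂ : S₂.card = k) :
    Submodule.span ℝ (M.transpose '' ↑(S₁ ∩ S₂)) =
      Submodule.span ℝ (M.transpose '' ↑S₁) ⊓ Submodule.span ℝ (M.transpose '' ↑S₂) := by
  apply le_antisymm
  · exact le_inf
      (Submodule.span_mono (Set.image_mono (by exact_mod_cast Finset.inter_subset_left)))
      (Submodule.span_mono (Set.image_mono (by exact_mod_cast Finset.inter_subset_right)))
  · rintro x ⟨h1, h2⟩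
    obtain ⟨a₁, ha₁, rfl⟩ := (mem_span_cols M S₁ x).mp h1
    obtain ⟨a₂, ha₂, hEq⟩ := (mem_span_cols M S₂ _).mp h2
    have sparse : ∀ (a : Fin m → ℝ) (S : Finset (Fin m)), S.card = k →
        (∀ i, i ∉ S → a i = 0) → KSparse k a := by
      intro a S hS ha
      refine le_trans (Finset.card_le_card ?_) hS.le
      intro i hi
      simp only [Finset.mem_filter] at hi
      by_contra h
      exact hi.2 (ha i h)
    have := hM a₂ a₁ (sparse a₂ S₂ hS₂ ha₂) (sparse a₁ S₁ hS₁ ha₁) hEq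
    subst this
    exact (mem_span_cols M (S₁ ∩ S₂) _).mpr
      ⟨a₂, fun i hi => by
        rcases (by simpa [Finset.mem_inter, not_and_or] using not_and_or.mp (by simpa [Finset.mem_inter] using hi) : i ∉ S₁ ∨ i ∉ S₂) with h | h
        exacts [ha₁ i h, ha₂ i h], rfl⟩
end

section
/- Let k < m be positive integers, and let A, B be n×m real matrices where A satisfies the spark condition for sparsity k. Suppose π is a map from k-element subsets of {1,...,m} to k-element subsets of {1,...,m} such that Span{A_S} = Span{B_{π(S)}} for all k-element subsets S. Then there exist a permutation matrix P and an invertible diagonal matrix D with A = B P D. -/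
open Finset Submodule

section LinearIndepOn

variable {R M ι : Type*} [Ring R] [AddCommGroup M] [Module R M] {v : ι → M}

theorem LinearIndepOn.span_image_inf_span_image_le {s t : Set ι}
    (h : LinearIndepOn R v (s ∪ t)) :
    span R (v '' s) ⊓ span R (v '' t) ≤ span R (v '' (s ∩ t)) := by
  rintro x ⟨hs, ht⟩
  obtain ⟨f, hf, rfl⟩ := (Finsupp.mem_span_image_iff_linearCombination R).1 hs
  obtain ⟨g, hg, hfg⟩ := (Finsupp.mem_span_image_iff_linearCombination R).1 ht
  obtain rfl : f = g := linearIndepOn_iffₛ.1 h f (Finsupp.supported_mono Set.subset_union_left hf)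
    g (Finsupp.supported_mono Set.subset_union_right hg) hfg.symm
  rw [Finsupp.mem_span_image_iff_linearCombination, Finsupp.supported_inter]
  exact ⟨f, ⟨hf, hg⟩, rfl⟩

theorem LinearIndepOn.subset_of_span_image_le [Nontrivial R] {s t : Set ι}
    (h : LinearIndepOn R v (s ∪ t)) (hle : span R (v '' s) ≤ span R (v '' t)) : s ⊆ t := by
  intro i hi
  by_contra hit
  exact (h.mono (Set.insert_subset (Or.inl hi) Set.subset_union_right)).notMem_span_of_insert hit
    (hle (subset_span (Set.mem_image_of_mem v hi)))

variable [DecidableEq ι] {k : ℕ}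

theorem subset_of_span_image_le_of_card_le [Nontrivial R]
    (hv : ∀ s : Finset ι, #s ≤ 2 * k → LinearIndepOn R v (s : Set ι)) {S T : Finset ι}
    (hS : #S ≤ k) (hT : #T ≤ k) (hle : span R (v '' S) ≤ span R (v '' T)) : S ⊆ T := by
  have hST := hv (S ∪ T) ((card_union_le S T).trans (by omega))
  rw [coe_union] at hST
  exact_mod_cast hST.subset_of_span_image_le hle

theorem mem_span_image_inf'
    (hv : ∀ s : Finset ι, #s ≤ 2 * k → LinearIndepOn R v (s : Set ι))
    {𝓢 : Finset (Finset ι)} (h𝓢 : 𝓢.Nonempty) (hcard : ∀ S ∈ 𝓢, #S ≤ k) {x : M}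
    (hx : ∀ S ∈ 𝓢, x ∈ span R (v '' S)) : x ∈ span R (v '' ↑(𝓢.inf' h𝓢 id)) := by
  suffices #(𝓢.inf' h𝓢 id) ≤ k ∧ x ∈ span R (v '' ↑(𝓢.inf' h𝓢 id)) from this.2
  refine inf'_induction h𝓢 id (p := fun T => #T ≤ k ∧ x ∈ span R (v '' ↑T))
    ?_ fun S hS => ⟨hcard S hS, hx S hS⟩
  rintro T₁ ⟨h₁, hx₁⟩ T₂ ⟨h₂, hx₂⟩
  have hT := hv (T₁ ∪ T₂) ((card_union_le T₁ T₂).trans (by omega))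
  rw [coe_union] at hT
  refine ⟨(card_le_card inter_subset_left).trans h₁, ?_⟩
  simpa using hT.span_image_inf_span_image_le ⟨hx₁, hx₂⟩

end LinearIndepOn

theorem kSparse_of_support_subset {m k : ℕ} {a : Fin m → ℝ} {s : Finset (Fin m)}
    (ha : ∀ i, a i ≠ 0 → i ∈ s) (hs : #s ≤ k) : KSparse k a :=
  (card_le_card fun i hi => ha i (mem_filter.1 hi).2).trans hs

theorem linearIndepOn_transpose_of_injOn_kSparse {n m k : ℕ} {A : Matrix (Fin n) (Fin m) ℝ}
    (hA : ∀ a₁ a₂ : Fin m → ℝ, KSparse k a₁ → KSparse k a₂ →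
      A.mulVec a₁ = A.mulVec a₂ → a₁ = a₂)
    {s : Finset (Fin m)} (hs : #s ≤ 2 * k) : LinearIndepOn ℝ A.transpose (s : Set (Fin m)) := by
  refine linearIndepOn_finset_iff.2 fun g hg => ?_
  -- a vanishing combination of at most `2k` columns splits into two `k`-sparse vectors
  -- with the same image under `A`
  obtain ⟨s₁, hs₁, hs₁card⟩ := exists_subset_card_eq (min_le_right k #s)
  set a₁ : Fin m → ℝ := fun i => if i ∈ s₁ then g i else 0
  set a₂ : Fin m → ℝ := fun i => if i ∈ s \ s₁ then -g i else 0
  have hsparse₁ : KSparse k a₁ :=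
    kSparse_of_support_subset (fun i hi => by by_contra h; exact hi (if_neg h)) (by omega)
  have hsparse₂ : KSparse k a₂ :=
    kSparse_of_support_subset (fun i hi => by by_contra h; exact hi (if_neg h))
      (by rw [card_sdiff_of_subset hs₁]; omega)
  have hdiff : a₁ - a₂ = fun i => if i ∈ s then g i else 0 := by
    ext i
    by_cases h₁ : i ∈ s₁
    · simp [a₁, a₂, h₁, hs₁ h₁]
    · by_cases h : i ∈ s <;> simp [a₁, a₂, h₁, h]
  have heq : A.mulVec a₁ = A.mulVec a₂ := by
    rw [← sub_eq_zero, ← Matrix.mulVec_sub, hdiff, ← Matrix.vecMul_transpose,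
      Matrix.vecMul_eq_sum, ← hg]
    simp only [ite_smul, zero_smul, sum_ite_mem, univ_inter]
  have ha := hA a₁ a₂ hsparse₁ hsparse₂ heq
  intro i hi
  have hai := congrFun ha i
  by_cases h₁ : i ∈ s₁
  · simpa [a₁, a₂, h₁] using hai
  · simpa [a₁, a₂, h₁, hi] using hai.symm

section Combinatorics

variable {α : Type*} [Fintype α] {k : ℕ}

theorem exists_card_eq_mem (hk : 0 < k) (hkα : k ≤ Fintype.card α) (a : α) :
    ∃ S : Finset α, #S = k ∧ a ∈ S := by
  obtain ⟨S, haS, -, hS⟩ := exists_subsuperset_card_eq (s := {a}) (t := univ) (n := k)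
    (subset_univ _) (by rw [card_singleton]; exact hk) (by simpa using hkα)
  exact ⟨S, hS, singleton_subset_iff.1 haS⟩

variable [DecidableEq α]

theorem card_filter_mem_powersetCard_univ (hk : 0 < k) (a : α) :
    #{T ∈ powersetCard k (univ : Finset α) | a ∈ T} =
      (Fintype.card α - 1).choose (k - 1) := by
  simpa using
    card_filter_powersetCard_subset {a} univ k (subset_univ _) (by rw [card_singleton]; exact hk)

theorem exists_card_eq_mem_notMem (hk : 0 < k) (hkα : k < Fintype.card α) {a b : α}
    (hab : a ≠ b) : ∃ S : Finset α, #S = k ∧ a ∈ S ∧ b ∉ S := by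
  obtain ⟨S, haS, hSb, hS⟩ :=
    exists_subsuperset_card_eq (s := {a}) (t := univ.erase b) (n := k) (by simpa using hab)
      (by rw [card_singleton]; exact hk) (by rw [card_erase_of_mem (mem_univ b), card_univ]; omega)
  exact ⟨S, hS, singleton_subset_iff.1 haS, fun hb => by simpa using hSb hb⟩

/-- `(card α - 1).choose (k - 1)` counts the `k`-sets through a point; a family that large with
two common points would be a proper part of such a star. -/
theorem card_inf_le_one_of_choose_le (hk : 0 < k) (hkα : k < Fintype.card α)
    {𝓕 : Finset (Finset α)} (h𝓕 : 𝓕 ⊆ powersetCard k univ)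
    (hcard : (Fintype.card α - 1).choose (k - 1) ≤ #𝓕) : #(𝓕.inf id) ≤ 1 := by
  by_contra! h
  obtain ⟨a, ha, b, hb, hab⟩ := one_lt_card.1 h
  have hstar : 𝓕 ⊂ {T ∈ powersetCard k (univ : Finset α) | a ∈ T} := by
    have hsub : 𝓕 ⊆ {T ∈ powersetCard k (univ : Finset α) | a ∈ T} := fun T hT =>
      mem_filter.2 ⟨h𝓕 hT, inf_le (f := id) hT ha⟩
    refine (ssubset_iff_of_subset hsub).2 ?_
    obtain ⟨S, hS, haS, hbS⟩ := exists_card_eq_mem_notMem hk hkα hab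
    exact ⟨S, by simp [hS, haS], fun hS𝓕 => hbS (inf_le (f := id) hS𝓕 hb)⟩
  have := card_lt_card hstar
  rw [card_filter_mem_powersetCard_univ hk] at this
  omega

end Combinatorics

structure SpanMatching (R : Type*) {M ι : Type*} [Ring R] [AddCommGroup M] [Module R M]
    (v w : ι → M) (k : ℕ) (π : Finset ι → Finset ι) : Prop where
  linearIndepOn : ∀ s : Finset ι, #s ≤ 2 * k → LinearIndepOn R v (s : Set ι)
  card_eq : ∀ S : Finset ι, #S = k → #(π S) = k
  span_eq : ∀ S : Finset ι, #S = k → span R (v '' S) = span R (w '' π S)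

namespace SpanMatching

variable {R M ι : Type*} [Ring R] [Nontrivial R] [AddCommGroup M] [Module R M] [Fintype ι]
  [DecidableEq ι] {v w : ι → M} {k : ℕ} {π : Finset ι → Finset ι}

theorem bijOn_powersetCard (h : SpanMatching R v w k π) :
    Set.BijOn π ↑(powersetCard k (univ : Finset ι)) ↑(powersetCard k (univ : Finset ι)) := by
  have hmaps :
      Set.MapsTo π ↑(powersetCard k (univ : Finset ι)) ↑(powersetCard k (univ : Finset ι)) :=
    fun S hS => mem_powersetCard_univ.2 (h.card_eq S (mem_powersetCard_univ.1 hS))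
  refine ((Set.toFinite _).injOn_iff_bijOn_of_mapsTo hmaps).1 fun S hS T hT hST => ?_
  simp only [mem_coe, mem_powersetCard_univ] at hS hT
  have hspan := (h.span_eq S hS).trans (hST ▸ (h.span_eq T hT).symm)
  exact (subset_of_span_image_le_of_card_le h.linearIndepOn hS.le hT.le hspan.le).antisymm
    (subset_of_span_image_le_of_card_le h.linearIndepOn hT.le hS.le hspan.ge)

theorem exists_mem_image (h : SpanMatching R v w k π) (hk : 0 < k)
    (hkι : k ≤ Fintype.card ι) (l : ι) : ∃ S : Finset ι, #S = k ∧ l ∈ π S := by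
  obtain ⟨T, hT, hlT⟩ := exists_card_eq_mem hk hkι l
  obtain ⟨S, hS, rfl⟩ := h.bijOn_powersetCard.surjOn (mem_powersetCard_univ.2 hT)
  exact ⟨S, mem_powersetCard_univ.1 hS, hlT⟩

theorem card_filter_mem_image (h : SpanMatching R v w k π) (l : ι) :
    #{S ∈ powersetCard k (univ : Finset ι) | l ∈ π S} =
      #{T ∈ powersetCard k (univ : Finset ι) | l ∈ T} := by
  refine card_nbij π (fun S hS => ?_) (h.bijOn_powersetCard.injOn.mono fun S hS => ?_)
    fun T hT => ?_
  · simp only [mem_coe, mem_filter] at hS ⊢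
    exact ⟨h.bijOn_powersetCard.mapsTo hS.1, hS.2⟩
  · exact (mem_filter.1 hS).1
  · simp only [mem_coe, mem_filter] at hT
    obtain ⟨S, hS, rfl⟩ := h.bijOn_powersetCard.surjOn hT.1
    exact ⟨S, mem_filter.2 ⟨hS, hT.2⟩, rfl⟩

theorem exists_smul_eq (h : SpanMatching R v w k π) (hk : 0 < k)
    (hkι : k < Fintype.card ι) (l : ι) : ∃ j, ∃ c : R, w l = c • v j := by
  set 𝓕 := {S ∈ powersetCard k (univ : Finset ι) | l ∈ π S}
  have h𝓕 : 𝓕.Nonempty :=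
    let ⟨S, hS, hl⟩ := h.exists_mem_image hk hkι.le l
    ⟨S, mem_filter.2 ⟨mem_powersetCard_univ.2 hS, hl⟩⟩
  have hmem : w l ∈ span R (v '' ↑(𝓕.inf' h𝓕 id)) := by
    refine mem_span_image_inf' h.linearIndepOn h𝓕
      (fun S hS => (mem_powersetCard_univ.1 (mem_filter.1 hS).1).le) fun S hS => ?_
    obtain ⟨hS, hl⟩ := mem_filter.1 hS
    rw [h.span_eq S (mem_powersetCard_univ.1 hS)]
    exact subset_span (Set.mem_image_of_mem w hl)
  have hcard : #(𝓕.inf' h𝓕 id) ≤ 1 := by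
    rw [inf'_eq_inf]
    refine card_inf_le_one_of_choose_le hk hkι (filter_subset _ _) ?_
    rw [h.card_filter_mem_image, card_filter_mem_powersetCard_univ hk]
  have : Nonempty ι := ⟨l⟩
  obtain ⟨j, hj⟩ := card_le_one_iff_subset_singleton.1 hcard
  refine ⟨j, (mem_span_singleton.1 ?_).imp fun c hc => hc.symm⟩
  simpa using span_mono (Set.image_mono (coe_subset.2 hj)) hmem

theorem exists_perm_smul_eq (h : SpanMatching R v w k π) (hk : 0 < k)
    (hkι : k < Fintype.card ι) :
    ∃ σ : Equiv.Perm ι, ∃ c : ι → R, (∀ l, c l ≠ 0) ∧ ∀ l, w l = c l • v (σ l) := by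
  classical
  choose q c hqc using h.exists_smul_eq hk hkι
  have hcover : ∀ S : Finset ι, #S = k → S ⊆ {l ∈ π S | c l ≠ 0}.image q := by
    intro S hS
    refine subset_of_span_image_le_of_card_le h.linearIndepOn hS.le
      (card_image_le.trans ((card_filter_le _ _).trans (h.card_eq S hS).le)) ?_
    rw [h.span_eq S hS, span_le]
    rintro _ ⟨l, hl, rfl⟩
    rw [hqc l]
    by_cases hc : c l = 0
    · simp [hc]
    · exact smul_mem _ _
        (subset_span ⟨q l, mem_coe.2 (mem_image_of_mem q (mem_filter.2 ⟨hl, hc⟩)), rfl⟩)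
  have hq : Function.Surjective q := fun j => by
    obtain ⟨S, hS, hjS⟩ := exists_card_eq_mem hk hkι.le j
    obtain ⟨l, -, hl⟩ := mem_image.1 (hcover S hS hjS)
    exact ⟨l, hl⟩
  have hc : ∀ l, c l ≠ 0 := fun l => by
    obtain ⟨S, hS, hl⟩ := h.exists_mem_image hk hkι.le l
    have hall : {l ∈ π S | c l ≠ 0} = π S := by
      refine eq_of_subset_of_card_le (filter_subset _ _) ?_
      rw [h.card_eq S hS, ← hS]
      exact (card_le_card (hcover S hS)).trans card_image_le
    rw [← hall] at hl
    exact (mem_filter.1 hl).2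
  exact ⟨Equiv.ofBijective q (Finite.surjective_iff_bijective.1 hq), c, hc, hqc⟩

end SpanMatching

theorem stmt5 {n m k : ℕ} (hk : 0 < k) (hkm : k < m)
    (A B : Matrix (Fin n) (Fin m) ℝ)
    (hA : ∀ a₁ a₂ : Fin m → ℝ, KSparse k a₁ → KSparse k a₂ →
      A.mulVec a₁ = A.mulVec a₂ → a₁ = a₂)
    (π : Finset (Fin m) → Finset (Fin m))
    (hπcard : ∀ S : Finset (Fin m), S.card = k → (π S).card = k)
    (hspan : ∀ S : Finset (Fin m), S.card = k →
      Submodule.span ℝ (A.transpose '' ↑S) = Submodule.span ℝ (B.transpose '' ↑(π S))) :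
    ∃ (σ : Equiv.Perm (Fin m)) (d : Fin m → ℝ),
      (∀ i, d i ≠ 0) ∧ A = B * σ.permMatrix ℝ * Matrix.diagonal d := by
  have h : SpanMatching ℝ A.transpose B.transpose k π :=
    ⟨fun _ => linearIndepOn_transpose_of_injOn_kSparse hA, hπcard, hspan⟩
  obtain ⟨σ, c, hc, hBA⟩ := h.exists_perm_smul_eq hk (by simpa using hkm)
  refine ⟨σ, fun j => (c (σ.symm j))⁻¹, fun j => inv_ne_zero (hc _), ?_⟩
  ext i j
  have hB : B i (σ.symm j) = c (σ.symm j) * A i j := by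
    simpa using congrFun (hBA (σ.symm j)) i
  rw [Matrix.mul_diagonal, Equiv.Perm.permMatrix, PEquiv.mul_toMatrix_toPEquiv,
    Matrix.submatrix_apply, id, hB]
  field_simp [hc (σ.symm j)]
end

section
/- Let k < m be positive integers, and let A, B be n×m real matrices where A satisfies the spark condition for sparsity k. Suppose π is a map on k-element subsets of {1,...,m} with Span{A_S} = Span{B_{π(S)}} for all k-element subsets S. Then π is injective (hence bijective). -/
/-! If `j ∉ S'` but the column `A_j` lies in `span A_{S'}` with `|S'| ≤ k`, then `A_j = A a` for some
`a` supported in `S'`, so `a` and the unit vector `e_j` are distinct `k`-sparse vectors with the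
same image, contradicting the spark condition. Hence `span A_S ≤ span A_{S'}` forces `S ⊆ S'`, and
`π S = π S'` gives `span A_S = span B_{π S} = span A_{S'}`. -/

open Matrix Submodule

theorem KSparse.of_support_subset {m k : ℕ} {a : Fin m → ℝ} {s : Finset (Fin m)}
    (hs : s.card ≤ k) (ha : ∀ i, a i ≠ 0 → i ∈ s) : KSparse k a :=
  (Finset.card_le_card fun i hi => ha i (Finset.mem_filter.1 hi).2).trans hs

theorem Matrix.exists_mulVec_eq_of_mem_span_transpose_image {R ι κ : Type*} [CommSemiring R]
    [Fintype κ] {A : Matrix ι κ R} {s : Set κ} {v : ι → R}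
    (hv : v ∈ span R (Aᵀ '' s)) : ∃ a : κ → R, (∀ i, a i ≠ 0 → i ∈ s) ∧ A *ᵥ a = v := by
  obtain ⟨l, hls, rfl⟩ := (Finsupp.mem_span_image_iff_linearCombination R).1 hv
  refine ⟨l, fun i hi => hls (Finsupp.mem_support_iff.2 hi), ?_⟩
  rw [Finsupp.linearCombination_apply R (v := fun j => Aᵀ j), Finsupp.sum_fintype _ _ (by simp),
    mulVec_eq_sum]
  simp only [op_smul_eq_smul]

theorem mem_of_transpose_mem_span_of_spark {n m k : ℕ} (hk : 0 < k)
    {A : Matrix (Fin n) (Fin m) ℝ}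
    (hA : ∀ a₁ a₂ : Fin m → ℝ, KSparse k a₁ → KSparse k a₂ → A *ᵥ a₁ = A *ᵥ a₂ → a₁ = a₂)
    {s : Finset (Fin m)} (hs : s.card ≤ k) {j : Fin m} (hj : Aᵀ j ∈ span ℝ (Aᵀ '' ↑s)) :
    j ∈ s := by
  obtain ⟨a, has, hAa⟩ := exists_mulVec_eq_of_mem_span_transpose_image hj
  have hsingle : KSparse k (Pi.single j 1 : Fin m → ℝ) :=
    KSparse.of_support_subset (s := {j}) (Finset.card_singleton j ▸ hk) fun i hi =>
      Finset.mem_singleton.2 (by_contra fun hij => hi (Pi.single_eq_of_ne hij 1))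
  have hAe : A *ᵥ Pi.single j 1 = Aᵀ j := by ext; simp
  have ha : a = Pi.single j 1 :=
    hA a _ (KSparse.of_support_subset hs has) hsingle (hAa.trans hAe.symm)
  exact has j (by simp [ha])

theorem subset_of_span_transpose_image_le {n m k : ℕ} (hk : 0 < k)
    {A : Matrix (Fin n) (Fin m) ℝ}
    (hA : ∀ a₁ a₂ : Fin m → ℝ, KSparse k a₁ → KSparse k a₂ → A *ᵥ a₁ = A *ᵥ a₂ → a₁ = a₂)
    {s t : Finset (Fin m)} (ht : t.card ≤ k) (hst : span ℝ (Aᵀ '' ↑s) ≤ span ℝ (Aᵀ '' ↑t)) :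
    s ⊆ t := fun _ hj =>
  mem_of_transpose_mem_span_of_spark hk hA ht (hst (subset_span ⟨_, hj, rfl⟩))

theorem stmt6_general {n m k : ℕ} (hk : 0 < k)
    (A B : Matrix (Fin n) (Fin m) ℝ)
    (hA : ∀ a₁ a₂ : Fin m → ℝ, KSparse k a₁ → KSparse k a₂ →
      A.mulVec a₁ = A.mulVec a₂ → a₁ = a₂)
    (π : Finset (Fin m) → Finset (Fin m))
    (hspan : ∀ S : Finset (Fin m), S.card = k →
      Submodule.span ℝ (A.transpose '' ↑S) = Submodule.span ℝ (B.transpose '' ↑(π S))) :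
    ∀ S S' : Finset (Fin m), S.card = k → S'.card = k → π S = π S' → S = S' := by
  intro S S' hS hS' hπ
  have h : span ℝ (Aᵀ '' ↑S) = span ℝ (Aᵀ '' ↑S') := by
    rw [hspan S hS, hspan S' hS', hπ]
  exact (subset_of_span_transpose_image_le hk hA hS'.le h.le).antisymm
    (subset_of_span_transpose_image_le hk hA hS.le h.ge)

theorem stmt6 {n m k : ℕ} (hk : 0 < k) (hkm : k < m)
    (A B : Matrix (Fin n) (Fin m) ℝ)
    (hA : ∀ a₁ a₂ : Fin m → ℝ, KSparse k a₁ → KSparse k a₂ →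
      A.mulVec a₁ = A.mulVec a₂ → a₁ = a₂)
    (π : Finset (Fin m) → Finset (Fin m))
    (hπcard : ∀ S : Finset (Fin m), S.card = k → (π S).card = k)
    (hspan : ∀ S : Finset (Fin m), S.card = k →
      Submodule.span ℝ (A.transpose '' ↑S) = Submodule.span ℝ (B.transpose '' ↑(π S))) :
    ∀ S S' : Finset (Fin m), S.card = k → S'.card = k → π S = π S' → S = S' :=
  stmt6_general hk A B hA π hspan
end

section
/- Let k < m and A, B be n×m real matrices where A satisfies the spark condition for sparsity k, and suppose π is a bijection on k-element subsets of {1,...,m} with Span{A_S} = Span{B_{π(S)}} for all k-element subsets S. Then every k columns of B are linearly independent. -/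
lemma aux_indep {n m k : ℕ} (A : Matrix (Fin n) (Fin m) ℝ)
    (hA : ∀ a₁ a₂ : Fin m → ℝ, KSparse k a₁ → KSparse k a₂ →
      A.mulVec a₁ = A.mulVec a₂ → a₁ = a₂)
    (T : Finset (Fin m)) (hT : T.card ≤ k) :
    LinearIndependent ℝ (fun (j : {x // x ∈ T}) => A.transpose (j : Fin m)) := by
  rw [Fintype.linearIndependent_iff]
  intro g hg j
  set a : Fin m → ℝ := fun i => if h : i ∈ T then g ⟨i, h⟩ else 0 with ha
  have hsupp : (Finset.univ.filter fun i => a i ≠ 0) ⊆ T := by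
    intro i hi
    simp only [Finset.mem_filter, ha] at hi
    by_contra h
    exact hi.2 (by simp [h])
  have hks : KSparse k a := le_trans (Finset.card_le_card hsupp) hT
  have hks0 : KSparse k (0 : Fin m → ℝ) := by simp [KSparse]
  have hmv : A.mulVec a = A.mulVec 0 := by
    funext i
    have h0 := congrFun hg i
    simp only [Finset.sum_apply, Pi.smul_apply, smul_eq_mul, Pi.zero_apply,
      Finset.univ_eq_attach, Matrix.transpose_apply] at h0
    simp only [Matrix.mulVec_zero, Pi.zero_apply, Matrix.mulVec, dotProduct]
    have key : ∑ x ∈ T.attach, A i ↑x * a ↑x = 0 := by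
      rw [← h0]
      exact Finset.sum_congr rfl fun x _ => by simp [ha, x.2, mul_comm]
    rw [← Finset.sum_subset T.subset_univ (fun x _ hx => by simp [ha, hx]),
        ← Finset.sum_attach T (fun x => A i x * a x), key]
    simp
  have hz := hA a 0 hks hks0 hmv
  have := congrFun hz j
  simpa [ha, j.2] using this

theorem stmt7 {n m k : ℕ} (hk : 0 < k) (hkm : k < m)
    (A B : Matrix (Fin n) (Fin m) ℝ)
    (hA : ∀ a₁ a₂ : Fin m → ℝ, KSparse k a₁ → KSparse k a₂ →
      A.mulVec a₁ = A.mulVec a₂ → a₁ = a₂)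
    (π : Finset (Fin m) → Finset (Fin m))
    (hπ : Set.BijOn π {S : Finset (Fin m) | S.card = k} {S : Finset (Fin m) | S.card = k})
    (hspan : ∀ S : Finset (Fin m), S.card = k →
      Submodule.span ℝ (A.transpose '' ↑S) = Submodule.span ℝ (B.transpose '' ↑(π S))) :
    ∀ S : Finset (Fin m), S.card = k →
      LinearIndependent ℝ (fun (j : {x // x ∈ S}) => B.transpose (j : Fin m)) := by
  intro S hS
  obtain ⟨T, hT, hTS⟩ := hπ.surjOn (show S ∈ {S : Finset (Fin m) | S.card = k} from hS)
  have hT' : T.card = k := hT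
  have hAind := aux_indep A hA T (le_of_eq hT')
  have hfr : Module.finrank ℝ (Submodule.span ℝ (A.transpose '' ↑T)) = k := by
    have h1 := finrank_span_eq_card hAind
    rw [show Set.range (fun (j : {x // x ∈ T}) => A.transpose (j : Fin m))
        = A.transpose '' ↑T from (Set.image_eq_range _ _).symm] at h1
    rw [h1, Fintype.card_coe, hT']
  have hsp : Submodule.span ℝ (B.transpose '' ↑S) = Submodule.span ℝ (A.transpose '' ↑T) := by
    rw [hspan T hT', hTS]
  rw [linearIndependent_iff_card_eq_finrank_span]
  rw [show Set.range (fun (j : {x // x ∈ S}) => B.transpose (j : Fin m))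
      = B.transpose '' ↑S from (Set.image_eq_range _ _).symm]
  rw [Fintype.card_coe, hS, Set.finrank, hsp, hfr]
end

section
/- Every 2-coloring of a 3×7 grid (the set {1,2,3}×{1,...,7}) contains a monochromatic 2×2 combinatorial submatrix: there exist a 2-element subset H1 ⊆ {1,2,3} and a 2-element subset H2 ⊆ {1,...,7} such that all four points of H1 × H2 have the same color. -/
theorem stmt9 (f : Fin 3 × Fin 7 → Fin 2) :
    ∃ (H₁ : Finset (Fin 3)) (H₂ : Finset (Fin 7)),
      H₁.card = 2 ∧ H₂.card = 2 ∧
      ∃ c : Fin 2, ∀ a ∈ H₁, ∀ b ∈ H₂, f (a, b) = c := by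
  classical
  set pair : Fin 3 → Fin 3 × Fin 3 := ![(0,1),(0,2),(1,2)] with hpair
  set pick : Fin 7 → Fin 3 := fun b =>
    if f (0,b) = f (1,b) then 0 else if f (0,b) = f (2,b) then 1 else 2 with hpick
  have fin2 : ∀ x y z : Fin 2, x ≠ y → x ≠ z → y = z := by decide
  have ne : ∀ k : Fin 3, (pair k).1 ≠ (pair k).2 := by decide
  have mono : ∀ b, f ((pair (pick b)).1, b) = f ((pair (pick b)).2, b) := by
    intro b
    simp only [hpick, hpair]
    split_ifs with h1 h2
    · simpa using h1
    · simpa using h2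
    · simpa using fin2 _ _ _ h1 h2
  have : ∃ b₁ ∈ (Finset.univ : Finset (Fin 7)), ∃ b₂ ∈ (Finset.univ : Finset (Fin 7)),
      b₁ ≠ b₂ ∧ (pick b₁, f ((pair (pick b₁)).1, b₁)) = (pick b₂, f ((pair (pick b₂)).1, b₂)) := by
    apply Finset.exists_ne_map_eq_of_card_lt_of_maps_to
      (t := (Finset.univ : Finset (Fin 3 × Fin 2)))
    · simp
    · intro a _; simp
  obtain ⟨b₁, -, b₂, -, hne, heq⟩ := this
  have hk : pick b₁ = pick b₂ := congrArg Prod.fst heq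
  have hc : f ((pair (pick b₁)).1, b₁) = f ((pair (pick b₂)).1, b₂) := congrArg Prod.snd heq
  rw [← hk] at hc
  have h2 : f ((pair (pick b₁)).2, b₂) = f ((pair (pick b₁)).1, b₁) := by
    rw [hk, ← mono b₂, ← hk]; exact hc.symm
  refine ⟨{(pair (pick b₁)).1, (pair (pick b₁)).2}, {b₁, b₂}, ?_, ?_,
    f ((pair (pick b₁)).1, b₁), ?_⟩
  · rw [Finset.card_insert_of_notMem (by simp [ne (pick b₁)]), Finset.card_singleton]
  · rw [Finset.card_insert_of_notMem (by simp [hne]), Finset.card_singleton]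
  · intro a ha b hb
    simp only [Finset.mem_insert, Finset.mem_singleton] at ha hb
    rcases ha with rfl | rfl <;> rcases hb with rfl | rfl
    · rfl
    · exact hc.symm
    · exact (mono _).symm
    · exact h2
end

section
/- Fix a finite set C of c ≥ 2 colors and positive integers s. Define d_1 = s·c and d_2 = s·c^{2 s c}. Then for any finite sets T_1, T_2 with |T_1| ≥ d_1 and |T_2| ≥ d_2, and any coloring ν : T_1 × T_2 → C, there exist subsets H_1 ⊆ T_1 and H_2 ⊆ T_2, each of size s, such that ν is constant on H_1 × H_2. -/
theorem stmt11 {α β C : Type*} [Fintype C] (c s : ℕ)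
    (hc : Fintype.card C = c) (hc2 : 2 ≤ c) (hs : 0 < s)
    (T₁ : Finset α) (T₂ : Finset β)
    (hT₁ : s * c ≤ T₁.card) (hT₂ : s * c ^ (2 * s * c) ≤ T₂.card)
    (ν : α × β → C) :
    ∃ (H₁ : Finset α) (H₂ : Finset β),
      H₁ ⊆ T₁ ∧ H₂ ⊆ T₂ ∧ H₁.card = s ∧ H₂.card = s ∧
      ∃ col : C, ∀ a ∈ H₁, ∀ b ∈ H₂, ν (a, b) = col := by
  classical
  have hCne : Nonempty C := Fintype.card_pos_iff.mp (by omega)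
  -- choose S₁ ⊆ T₁ of size s*c
  obtain ⟨S₁, hS₁T, hS₁card⟩ := Finset.exists_subset_card_eq hT₁
  -- row pattern function
  set f : β → (↥S₁ → C) := fun b x => ν (x.1, b) with hf
  have hcard_fun : Fintype.card (↥S₁ → C) = c ^ (s * c) := by
    rw [Fintype.card_fun, hc, Fintype.card_coe, hS₁card]
  have hc1 : 1 ≤ c := le_trans (by norm_num) hc2
  have hmul : (Finset.univ : Finset (↥S₁ → C)).card * s ≤ T₂.card := by
    rw [Finset.card_univ, hcard_fun]
    calc c ^ (s * c) * s ≤ c ^ (2 * s * c) * s := by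
          apply Nat.mul_le_mul_right
          exact Nat.pow_le_pow_right hc1 (by nlinarith)
      _ = s * c ^ (2 * s * c) := Nat.mul_comm _ _
      _ ≤ T₂.card := hT₂
  obtain ⟨g, -, hg⟩ := Finset.exists_le_card_fiber_of_mul_le_card_of_maps_to
    (s := T₂) (t := (Finset.univ : Finset (↥S₁ → C))) (f := f)
    (fun b _ => Finset.mem_univ _) Finset.univ_nonempty hmul
  obtain ⟨H₂, hH₂sub, hH₂card⟩ := Finset.exists_subset_card_eq hg
  -- pigeonhole on S₁ for colors of g
  have hmul2 : (Finset.univ : Finset C).card * s ≤ (Finset.univ : Finset ↥S₁).card := by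
    rw [Finset.card_univ, Finset.card_univ, hc, Fintype.card_coe, hS₁card]
    exact le_of_eq (Nat.mul_comm c s)
  obtain ⟨col, -, hcol⟩ := Finset.exists_le_card_fiber_of_mul_le_card_of_maps_to
    (s := (Finset.univ : Finset ↥S₁)) (t := (Finset.univ : Finset C)) (f := g)
    (fun x _ => Finset.mem_univ _) Finset.univ_nonempty hmul2
  obtain ⟨F, hFsub, hFcard⟩ := Finset.exists_subset_card_eq hcol
  refine ⟨F.map (Function.Embedding.subtype _), H₂, ?_, ?_, ?_, hH₂card, col, ?_⟩
  · intro a ha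
    simp only [Finset.mem_map, Function.Embedding.coe_subtype] at ha
    obtain ⟨x, -, rfl⟩ := ha
    exact hS₁T x.2
  · exact hH₂sub.trans (Finset.filter_subset _ _)
  · rw [Finset.card_map, hFcard]
  · intro a ha b hb
    simp only [Finset.mem_map, Function.Embedding.coe_subtype] at ha
    obtain ⟨x, hx, rfl⟩ := ha
    have hgx : g x = col := (Finset.mem_filter.mp (hFsub hx)).2
    have hfb : f b = g := (Finset.mem_filter.mp (hH₂sub hb)).2
    have : f b x = col := by rw [hfb, hgx]
    exact this
end

section
/- Let A be an n×m real matrix satisfying the spark condition for sparsity k (every min(m,2k) columns are linearly independent), with k ≤ n. Let S1,...,Sk be k-element subsets of {1,...,m}. Then for almost every (with respect to Lebesgue measure) choice of coefficient vectors t_1,...,t_k ∈ R^k, the k vectors y_j = Σ_{i=1}^k (t_j)_i A_{S_j^i} (where S_j^1 < ... < S_j^k are the elements of S_j and A_ℓ denotes the ℓ-th column of A) are linearly independent. -/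
/-!
The vectors `y_j` are the rows of a matrix `Y t` whose entries are linear in the coefficients
`t`, so `t ↦ det (Y t * (Y t)ᵀ)` is a polynomial vanishing exactly where the `y_j` are
dependent. A nonzero real polynomial vanishes only on a null set (induction on the number of
variables, by Fubini), so it suffices to exhibit a single good `t`. By the spark condition the
columns `A_{S_j}` are independent, so each span `⟨A_{S_j}⟩` has dimension `k`, and
`y_j ∈ ⟨A_{S_j}⟩` can be chosen greedily: `y_{r+1}` only has to avoid the span of
`y_1, …, y_r`, whose dimension is `r < k`.
-/

open MeasureTheory

open scoped Matrix

theorem MvPolynomial.volume_zeroSet_fin_eq_zero :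
    ∀ {N : ℕ} {p : MvPolynomial (Fin N) ℝ}, p ≠ 0 → volume {x | eval x p = 0} = 0
  | 0, p, hp => by
    obtain ⟨c, rfl⟩ := C_surjective (Fin 0) p
    simp_all
  | N + 1, p, hp => by
    set q := finSuccEquiv ℝ N p
    have hq : q ≠ 0 := (map_ne_zero_iff _ (finSuccEquiv ℝ N).injective).mpr hp
    set Z : Set (ℝ × (Fin N → ℝ)) := {y | eval (Fin.cons y.1 y.2) p = 0}
    have hZ : MeasurableSet Z := (measurableSet_singleton 0).preimage
      ((continuous_eval p).comp (continuous_fst.finCons continuous_snd)).measurable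
    have hpre : MeasurableEquiv.piFinSuccAbove (fun _ => ℝ) 0 ⁻¹' Z = {x | eval x p = 0} := by
      ext x
      simp [Z, MeasurableEquiv.piFinSuccAbove_apply, Fin.insertNthEquiv]
    -- Off the finitely many roots `a` of `q`, the slice over `a` is the zero set of the
    -- nonzero polynomial `q(a)` in the remaining `N` variables.
    have hslices : ∀ᵐ a : ℝ, volume (Prod.mk a ⁻¹' Z) = 0 := by
      have hroots : {a : ℝ | Polynomial.eval (C a) q = 0}.Finite :=
        (Polynomial.finite_setOfPred_isRoot hq).preimage (C_injective _ ℝ).injOn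
      filter_upwards [measure_eq_zero_iff_ae_notMem.mp (hroots.measure_zero volume)] with a ha
      have hslice : Prod.mk a ⁻¹' Z = {s | eval s (Polynomial.eval (C a) q) = 0} := by
        ext s
        simp only [Z, q, Set.mem_preimage, Set.mem_ofPred_eq,
          eval_polynomial_eval_finSuccEquiv, eval_C]
        rfl
      rw [hslice]
      exact volume_zeroSet_fin_eq_zero ha
    rw [← hpre, (volume_preserving_piFinSuccAbove (fun _ => ℝ) 0).measure_preimage
      hZ.nullMeasurableSet, Measure.volume_eq_prod, Measure.measure_prod_null hZ]
    exact hslices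

theorem MvPolynomial.volume_zeroSet_eq_zero {σ : Type*} [Fintype σ] {p : MvPolynomial σ ℝ}
    (hp : p ≠ 0) : volume {x : σ → ℝ | eval x p = 0} = 0 := by
  set e := Fintype.equivFin σ
  have hpre : MeasurableEquiv.piCongrLeft (fun _ => ℝ) e ⁻¹' {y | eval y (rename e p) = 0} =
      {x | eval x p = 0} := by
    ext x
    simp [eval_rename, Function.comp_def, MeasurableEquiv.piCongrLeft_apply_apply]
  rw [← hpre, (volume_measurePreserving_piCongrLeft (fun _ => ℝ) e).measure_preimage_equiv]
  exact volume_zeroSet_fin_eq_zero <|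
    (rename_injective e e.injective).ne_iff' (map_zero _) |>.mpr hp

theorem volume_preserving_uncurry (ι κ X : Type*) [Fintype ι] [Fintype κ] [MeasureSpace X]
    [SigmaFinite (volume : Measure X)] :
    MeasurePreserving (MeasurableEquiv.curry ι κ X).symm := by
  refine ⟨(MeasurableEquiv.curry ι κ X).symm.measurable, (Measure.pi_eq fun s hs => ?_).symm⟩
  rw [Measure.map_apply (MeasurableEquiv.curry ι κ X).symm.measurable (.univ_pi hs)]
  have hpre : (MeasurableEquiv.curry ι κ X).symm ⁻¹' Set.univ.pi s =
      Set.univ.pi fun i => Set.univ.pi fun j => s (i, j) := by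
    ext t
    simp [MeasurableEquiv.coe_curry_symm, Prod.forall]
  rw [hpre, volume_pi_pi]
  simp_rw [volume_pi_pi]
  exact (Fintype.prod_prod_type fun p : ι × κ => volume (s p)).symm

theorem Matrix.linearIndependent_row_iff_rank_eq_card {K m n : Type*} [Field K] [Fintype m]
    [Fintype n] (M : Matrix m n K) : LinearIndependent K M.row ↔ M.rank = Fintype.card m := by
  rw [M.rank_eq_finrank_span_row, linearIndependent_iff_card_eq_finrank_span, Set.finrank,
    eq_comm]

theorem Matrix.linearIndependent_row_iff_det_mul_transpose_ne_zero {K m n : Type*} [Field K]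
    [LinearOrder K] [IsStrictOrderedRing K] [Fintype m] [Fintype n] [DecidableEq m]
    (M : Matrix m n K) : LinearIndependent K M.row ↔ (M * Mᵀ).det ≠ 0 := by
  rw [linearIndependent_row_iff_rank_eq_card, ← rank_self_mul_transpose,
    ← linearIndependent_row_iff_rank_eq_card, linearIndependent_rows_iff_isUnit,
    isUnit_iff_isUnit_det, isUnit_iff_ne_zero]

theorem volume_setOf_not_linearIndependent_row_map_eval_eq_zero {σ ι η : Type*} [Fintype σ]
    [Fintype ι] [DecidableEq ι] [Fintype η] (M : Matrix ι η (MvPolynomial σ ℝ)) (t₀ : σ → ℝ)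
    (h₀ : LinearIndependent ℝ (M.map (MvPolynomial.eval t₀)).row) :
    volume {t | ¬ LinearIndependent ℝ (M.map (MvPolynomial.eval t)).row} = 0 := by
  have heval : ∀ t, MvPolynomial.eval t (M * Mᵀ).det =
      (M.map (MvPolynomial.eval t) * (M.map (MvPolynomial.eval t))ᵀ).det := fun t => by
    rw [RingHom.map_det, RingHom.mapMatrix_apply, Matrix.map_mul, Matrix.transpose_map]
  simp_rw [Matrix.linearIndependent_row_iff_det_mul_transpose_ne_zero, not_not, ← heval]
    at h₀ ⊢
  exact MvPolynomial.volume_zeroSet_eq_zero fun h => h₀ (by rw [h, map_zero])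

theorem volume_setOf_not_linearIndependent_sum_smul_eq_zero {ι κ η : Type*} [Fintype ι]
    [Fintype κ] [Fintype η] (B : ι → κ → η → ℝ) (t₀ : ι → κ → ℝ)
    (h₀ : LinearIndependent ℝ fun j => ∑ i, t₀ j i • B j i) :
    volume {t : ι → κ → ℝ | ¬ LinearIndependent ℝ fun j => ∑ i, t j i • B j i} = 0 := by
  classical
  set M : Matrix ι η (MvPolynomial (ι × κ) ℝ) :=
    .of fun j c => ∑ i, MvPolynomial.X (j, i) * MvPolynomial.C (B j i c)
  have hrow : ∀ t : ι → κ → ℝ, (M.map (MvPolynomial.eval (Function.uncurry t))).row =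
      fun j => ∑ i, t j i • B j i := fun t => by
    ext j c
    simp [M, Matrix.row, Finset.sum_apply]
  have hpre : (MeasurableEquiv.curry ι κ ℝ).symm ⁻¹'
      {t | ¬ LinearIndependent ℝ (M.map (MvPolynomial.eval t)).row} =
      {t | ¬ LinearIndependent ℝ fun j => ∑ i, t j i • B j i} := by
    ext t
    simp only [Set.mem_preimage, Set.mem_ofPred_eq, MeasurableEquiv.coe_curry_symm, hrow]
  rw [← hpre, (volume_preserving_uncurry ι κ ℝ).measure_preimage_equiv]
  exact volume_setOf_not_linearIndependent_row_map_eval_eq_zero M (Function.uncurry t₀)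
    (by rwa [hrow])

theorem exists_linearIndependent_forall_mem {K V : Type*} [DivisionRing K] [AddCommGroup V]
    [Module K V] : ∀ {r : ℕ} (W : Fin r → Submodule K V), (∀ j, r ≤ Module.finrank K (W j)) →
    ∃ v : Fin r → V, (∀ j, v j ∈ W j) ∧ LinearIndependent K v
  | 0, _, _ => ⟨Fin.elim0, fun j => j.elim0, linearIndependent_empty_type⟩
  | r + 1, W, hW => by
    obtain ⟨v, hvW, hv⟩ := exists_linearIndependent_forall_mem (W ∘ Fin.castSucc)
      fun j => (Nat.le_succ r).trans (hW _)
    have : Module.Finite K (Submodule.span K (Set.range v)) :=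
      .span_of_finite K (Set.finite_range v)
    have hnot : ¬ W (Fin.last r) ≤ Submodule.span K (Set.range v) := fun hle => by
      have := Submodule.finrank_mono hle
      rw [finrank_span_eq_card hv, Fintype.card_fin] at this
      exact absurd (hW (Fin.last r)) (by omega)
    obtain ⟨x, hxW, hx⟩ := SetLike.not_le_iff_exists.mp hnot
    refine ⟨Fin.snoc v x, Fin.lastCases ?_ fun j => ?_, linearIndependent_finSnoc.mpr ⟨hv, hx⟩⟩
    · simpa using hxW
    · simpa using hvW j

theorem exists_linearIndependent_sum_smul {K V κ : Type*} [Field K] [AddCommGroup V]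
    [Module K V] [Fintype κ] {r : ℕ} (B : Fin r → κ → V)
    (hB : ∀ j, LinearIndependent K (B j)) (hr : r ≤ Fintype.card κ) :
    ∃ t : Fin r → κ → K, LinearIndependent K fun j => ∑ i, t j i • B j i := by
  obtain ⟨v, hvB, hv⟩ := exists_linearIndependent_forall_mem
    (fun j => Submodule.span K (Set.range (B j))) fun j => (finrank_span_eq_card (hB j)).symm ▸ hr
  choose t ht using fun j => Submodule.mem_span_range_iff_exists_fun K |>.mp (hvB j)
  exact ⟨t, by simpa only [ht] using hv⟩

theorem Matrix.linearIndepOn_col_of_injOn_kSparse {η : Type*} {m k : ℕ}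
    (A : Matrix η (Fin m) ℝ) (hA : Set.InjOn A.mulVec {a | KSparse k a})
    (s : Finset (Fin m)) (hs : s.card ≤ k) : LinearIndepOn ℝ A.col (s : Set (Fin m)) := by
  have hsparse : ∀ f ∈ Finsupp.supported ℝ ℝ (s : Set (Fin m)), KSparse k ⇑f := by
    intro f hf
    refine (Finset.card_le_card fun x hx => ?_).trans hs
    exact hf (Finsupp.mem_support_iff.mpr (Finset.mem_filter.mp hx).2)
  have hcomb : ∀ f : Fin m →₀ ℝ, Finsupp.linearCombination ℝ A.col f = A *ᵥ ⇑f := by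
    intro f
    rw [Finsupp.linearCombination_apply, Finsupp.sum_fintype _ _ fun _ => zero_smul ℝ (A.col _)]
    ext c
    simp [Matrix.mulVec, dotProduct, mul_comm]
  rw [linearIndepOn_iffₛ]
  intro f hf g hg hfg
  exact DFunLike.coe_injective (hA (hsparse f hf) (hsparse g hg) (by rwa [← hcomb, ← hcomb]))

theorem stmt15_general {n m k : ℕ}
    (A : Matrix (Fin n) (Fin m) ℝ)
    (hA : ∀ a₁ a₂ : Fin m → ℝ, KSparse k a₁ → KSparse k a₂ →
      A.mulVec a₁ = A.mulVec a₂ → a₁ = a₂)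
    (S : Fin k → Finset (Fin m)) (hS : ∀ j, (S j).card = k) :
    volume {t : Fin k → Fin k → ℝ |
      ¬ LinearIndependent ℝ (fun j : Fin k =>
          ∑ i : Fin k, t j i • A.transpose (((S j).orderIsoOfFin (hS j) i : {x // x ∈ S j}) : Fin m))} = 0 := by
  set B : Fin k → Fin k → Fin n → ℝ := fun j i => A.col ((S j).orderIsoOfFin (hS j) i)
  have hB : ∀ j, LinearIndependent ℝ (B j) := fun j =>
    (A.linearIndepOn_col_of_injOn_kSparse (fun a₁ h₁ a₂ h₂ => hA a₁ a₂ h₁ h₂) (S j)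
      (hS j).le).comp _ ((S j).orderIsoOfFin (hS j)).injective
  obtain ⟨t₀, ht₀⟩ := exists_linearIndependent_sum_smul B hB (Fintype.card_fin k).ge
  exact volume_setOf_not_linearIndependent_sum_smul_eq_zero B t₀ ht₀

theorem stmt15 {n m k : ℕ} (hkn : k ≤ n)
    (A : Matrix (Fin n) (Fin m) ℝ)
    (hA : ∀ a₁ a₂ : Fin m → ℝ, KSparse k a₁ → KSparse k a₂ →
      A.mulVec a₁ = A.mulVec a₂ → a₁ = a₂)
    (S : Fin k → Finset (Fin m)) (hS : ∀ j, (S j).card = k) :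
    volume {t : Fin k → Fin k → ℝ |
      ¬ LinearIndependent ℝ (fun j : Fin k =>
          ∑ i : Fin k, t j i • A.transpose (((S j).orderIsoOfFin (hS j) i : {x // x ∈ S j}) : Fin m))} = 0 :=
  stmt15_general A hA S hS
end
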